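/- The soft Bellman operator is a γ-contraction: let S and A be nonempty finite sets, r : S × A → ℝ bounded, p(·|s,a) probability distributions on S, 0 < γ < 1, α > 0. Define (T Q)(s,a) = r(s,a) + γ ∑_{s'} p(s'|s,a) · α log ∑_{a'} exp(Q(s',a')/α). Then for any Q₁, Q₂ : S × A → ℝ, max_{s,a} |T Q₁(s,a) − T Q₂(s,a)| ≤ γ max_{s,a} |Q₁(s,a) − Q₂(s,a)|. -/
import Mathlib

open Real Finset

lemma lse_shift {A : Type} [Fintype A] [Nonempty A] (α : ℝ) (hα : 0 < α)
    (x y : A → ℝ) (c : ℝ) (h : ∀ a, x a ≤ y a + c) :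
    α * Real.log (∑ a, Real.exp (x a / α)) ≤
      α * Real.log (∑ a, Real.exp (y a / α)) + c := by
  have hpos : (0:ℝ) < ∑ a, Real.exp (y a / α) :=
    Finset.sum_pos (fun a _ => Real.exp_pos _) Finset.univ_nonempty
  have hsum : ∑ a, Real.exp (x a / α) ≤ Real.exp (c / α) * ∑ a, Real.exp (y a / α) := by
    rw [Finset.mul_sum]
    apply Finset.sum_le_sum
    intro a _
    rw [← Real.exp_add]
    apply Real.exp_le_exp.mpr
    rw [← add_div]
    gcongr
    linarith [h a]
  have hlog : Real.log (∑ a, Real.exp (x a / α)) ≤ c / α + Real.log (∑ a, Real.exp (y a / α)) := by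
    calc Real.log (∑ a, Real.exp (x a / α))
        ≤ Real.log (Real.exp (c / α) * ∑ a, Real.exp (y a / α)) :=
          Real.log_le_log (Finset.sum_pos (fun a _ => Real.exp_pos _) Finset.univ_nonempty) hsum
      _ = c / α + Real.log (∑ a, Real.exp (y a / α)) := by
          rw [Real.log_mul (Real.exp_ne_zero _) (ne_of_gt hpos), Real.log_exp]
  calc α * Real.log (∑ a, Real.exp (x a / α))
      ≤ α * (c / α + Real.log (∑ a, Real.exp (y a / α))) :=
        mul_le_mul_of_nonneg_left hlog (le_of_lt hα)
    _ = α * Real.log (∑ a, Real.exp (y a / α)) + c := by field_simp; ring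

theorem stmt15 {S A : Type} [Fintype S] [Fintype A] [Nonempty S] [Nonempty A]
    (r : S → A → ℝ) (p : S → A → S → ℝ)
    (hp0 : ∀ s a s', 0 ≤ p s a s') (hp1 : ∀ s a, ∑ s', p s a s' = 1)
    (γ α : ℝ) (hγ : 0 < γ) (hγ1 : γ < 1) (hα : 0 < α)
    (T : (S → A → ℝ) → (S → A → ℝ))
    (hT : ∀ Q s a, T Q s a
      = r s a + γ * ∑ s', p s a s' * (α * Real.log (∑ a', Real.exp (Q s' a' / α))))
    (Q₁ Q₂ : S → A → ℝ) :
    (⨆ s, ⨆ a, |T Q₁ s a - T Q₂ s a|) ≤ γ * ⨆ s, ⨆ a, |Q₁ s a - Q₂ s a| := by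
  set M : ℝ := ⨆ s, ⨆ a, |Q₁ s a - Q₂ s a| with hM
  have hQM : ∀ s a, |Q₁ s a - Q₂ s a| ≤ M := by
    intro s a
    have h1 : |Q₁ s a - Q₂ s a| ≤ ⨆ a, |Q₁ s a - Q₂ s a| :=
      le_ciSup (f := fun a => |Q₁ s a - Q₂ s a|) (Finite.bddAbove_range _) a
    exact h1.trans (le_ciSup (f := fun s => ⨆ a, |Q₁ s a - Q₂ s a|) (Finite.bddAbove_range _) s)
  -- pointwise bound on soft value difference
  set V : (S → A → ℝ) → S → ℝ :=
    fun Q s' => α * Real.log (∑ a', Real.exp (Q s' a' / α)) with hV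
  have hVM : ∀ s', |V Q₁ s' - V Q₂ s'| ≤ M := by
    intro s'
    rw [abs_sub_le_iff]
    constructor
    · have := lse_shift α hα (Q₁ s') (Q₂ s') M (fun a => by
        have := hQM s' a; rw [abs_sub_le_iff] at this; linarith [this.1])
      simp only [hV]; linarith
    · have := lse_shift α hα (Q₂ s') (Q₁ s') M (fun a => by
        have := hQM s' a; rw [abs_sub_le_iff] at this; linarith [this.2])
      simp only [hV]; linarith
  have hTpt : ∀ s a, |T Q₁ s a - T Q₂ s a| ≤ γ * M := by
    intro s a
    rw [hT, hT]
    have key : (r s a + γ * ∑ s', p s a s' * V Q₁ s') -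
        (r s a + γ * ∑ s', p s a s' * V Q₂ s')
        = γ * ∑ s', p s a s' * (V Q₁ s' - V Q₂ s') := by
      have : ∑ s', p s a s' * (V Q₁ s' - V Q₂ s')
          = (∑ s', p s a s' * V Q₁ s') - ∑ s', p s a s' * V Q₂ s' := by
        rw [← Finset.sum_sub_distrib]
        exact Finset.sum_congr rfl fun s' _ => by ring
      rw [this]; ring
    simp only [hV] at key
    rw [key, abs_mul, abs_of_pos hγ]
    apply mul_le_mul_of_nonneg_left _ (le_of_lt hγ)
    calc |∑ s', p s a s' * (V Q₁ s' - V Q₂ s')|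
        ≤ ∑ s', |p s a s' * (V Q₁ s' - V Q₂ s')| := Finset.abs_sum_le_sum_abs _ _
      _ ≤ ∑ s', p s a s' * M := by
          apply Finset.sum_le_sum
          intro s' _
          rw [abs_mul, abs_of_nonneg (hp0 s a s')]
          exact mul_le_mul_of_nonneg_left (hVM s') (hp0 s a s')
      _ = M := by rw [← Finset.sum_mul, hp1, one_mul]
  apply ciSup_le
  intro s
  exact ciSup_le fun a => hTpt s a
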